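/- arXiv:2211.01835 — 4 statements merged into one kernel-verified Lean document; each statement's English description precedes it below -/
import Mathlib

section
/- A smooth function G : ℝⁿ × ℝᵏ → ℝᵐ is bilinear in the Cartesian differential sense (D[G]((a,b),(c,d)) = G(a,d) + G(c,b)) if and only if G is ℝ-bilinear. -/
private lemma affine_of_const_deriv {F : Type*} [NormedAddCommGroup F] [NormedSpace ℝ F]
    (f : ℝ → F) (c : F) (h : ∀ t, HasDerivAt f c t) (s : ℝ) : f s = f 0 + s • c := by
  have h0 : ∀ t : ℝ, HasDerivAt (fun t => f t - t • c) 0 t := by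
    intro t
    exact ((h t).sub ((hasDerivAt_id t).smul_const c)).congr_deriv (by simp)
  have hconst := is_const_of_deriv_eq_zero (f := fun t => f t - t • c)
    (fun t => (h0 t).differentiableAt) (fun t => (h0 t).deriv) s 0
  simp only [zero_smul, sub_zero] at hconst
  rw [sub_eq_iff_eq_add] at hconst
  exact hconst

/-- a smooth function `G : ℝⁿ × ℝᵏ → ℝᵐ` is bilinear in the Cartesian
differential sense, i.e. `D[G]((a,b),(c,d)) = G(a,d) + G(c,b)` for all `a,b,c,d`,
iff `G` is `ℝ`-bilinear (ℝ-linear separately in each argument). -/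
theorem smooth_bilinear_iff {n k m : ℕ}
    (G : (Fin n → ℝ) × (Fin k → ℝ) → (Fin m → ℝ)) (hG : ContDiff ℝ (⊤ : ℕ∞) G) :
    (∀ (a c : Fin n → ℝ) (b d : Fin k → ℝ),
        fderiv ℝ G (a, b) (c, d) = G (a, d) + G (c, b)) ↔
      ((∀ b : Fin k → ℝ, IsLinearMap ℝ (fun a => G (a, b))) ∧
        (∀ a : Fin n → ℝ, IsLinearMap ℝ (fun b => G (a, b)))) := by
  have hGd : Differentiable ℝ G := hG.differentiable (by simp)
  constructor
  · intro H
    -- first, G (a, 0) + G (0, b) = 0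
    have key : ∀ a b, G (a, 0) + G (0, b) = 0 := by
      intro a b
      have h := H a 0 b 0
      rw [show ((0 : Fin n → ℝ), (0 : Fin k → ℝ)) = 0 from rfl, map_zero] at h
      exact h.symm
    have hG00 : G (0, 0) = 0 := by
      have h := key 0 0
      have h2 : (2 : ℝ) • G (0, 0) = 0 := by rw [two_smul]; exact h
      simpa using (smul_eq_zero.mp h2).resolve_left (by norm_num)
    have hA0 : ∀ a, G (a, (0 : Fin k → ℝ)) = 0 := by
      intro a
      have := key a 0
      rwa [hG00, add_zero] at this
    have h0B : ∀ b, G ((0 : Fin n → ℝ), b) = 0 := by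
      intro b
      have := key 0 b
      rwa [hA0, zero_add] at this
    -- curve derivatives
    have hcurve1 : ∀ (a c : Fin n → ℝ) (b : Fin k → ℝ) (t : ℝ),
        HasDerivAt (fun t : ℝ => G (a + t • c, b)) (G (c, b)) t := by
      intro a c b t
      have hγ : HasDerivAt (fun t : ℝ => (a + t • c, b)) ((c, (0 : Fin k → ℝ))) t := by
        have h1 : HasDerivAt (fun t : ℝ => a + t • c) c t := by
          exact ((hasDerivAt_const t a).add ((hasDerivAt_id t).smul_const c)).congr_deriv (by simp)
        exact h1.prodMk (hasDerivAt_const t b)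
      have := (hGd (a + t • c, b)).hasFDerivAt.comp_hasDerivAt t hγ
      rwa [H (a + t • c) c b 0, hA0, zero_add] at this
    have hcurve2 : ∀ (a : Fin n → ℝ) (b d : Fin k → ℝ) (t : ℝ),
        HasDerivAt (fun t : ℝ => G (a, b + t • d)) (G (a, d)) t := by
      intro a b d t
      have hγ : HasDerivAt (fun t : ℝ => (a, b + t • d)) (((0 : Fin n → ℝ), d)) t := by
        have h1 : HasDerivAt (fun t : ℝ => b + t • d) d t := by
          exact ((hasDerivAt_const t b).add ((hasDerivAt_id t).smul_const d)).congr_deriv (by simp)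
        exact (hasDerivAt_const t a).prodMk h1
      have := (hGd (a, b + t • d)).hasFDerivAt.comp_hasDerivAt t hγ
      rwa [H a 0 (b + t • d) d, h0B, add_zero] at this
    constructor
    · intro b
      constructor
      · intro a c
        have := affine_of_const_deriv _ _ (hcurve1 a c b) 1
        simpa using this
      · intro s a
        have := affine_of_const_deriv _ _ (hcurve1 0 a b) s
        simpa [h0B] using this
    · intro a
      constructor
      · intro b d
        have := affine_of_const_deriv _ _ (hcurve2 a b d) 1
        simpa using this
      · intro s b
        have := affine_of_const_deriv _ _ (hcurve2 a 0 b) s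
        simpa [hA0] using this
  · rintro ⟨h1, h2⟩ a c b d
    -- build the bilinear map
    let B : (Fin n → ℝ) →ₗ[ℝ] (Fin k → ℝ) →ₗ[ℝ] (Fin m → ℝ) :=
      { toFun := fun a =>
          { toFun := fun b => G (a, b)
            map_add' := (h2 a).map_add
            map_smul' := (h2 a).map_smul }
        map_add' := fun x y => LinearMap.ext fun b => (h1 b).map_add x y
        map_smul' := fun s x => LinearMap.ext fun b => (h1 b).map_smul s x }
    let L : (Fin n → ℝ) →ₗ[ℝ] ((Fin k → ℝ) →L[ℝ] (Fin m → ℝ)) :=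
      { toFun := fun a => LinearMap.toContinuousLinearMap (B a)
        map_add' := fun x y => by ext b; simp
        map_smul' := fun s x => by ext b; simp }
    let Bc : (Fin n → ℝ) →L[ℝ] ((Fin k → ℝ) →L[ℝ] (Fin m → ℝ)) :=
      LinearMap.toContinuousLinearMap L
    have hbb : IsBoundedBilinearMap ℝ (fun p : (Fin n → ℝ) × (Fin k → ℝ) => Bc p.1 p.2) :=
      Bc.isBoundedBilinearMap
    have hGeq : G = fun p : (Fin n → ℝ) × (Fin k → ℝ) => Bc p.1 p.2 := by
      funext p
      show G p = G (p.1, p.2)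
      rw [Prod.mk.eta]
    rw [hGeq, hbb.fderiv (a, b), hbb.deriv_apply]
end

section
/- In a linearly closed Cartesian differential category, the Jacobian satisfies the chain rule: J(g ∘ f) = ⊙ ∘ ⟨J(g) ∘ f, J(f)⟩, where ⊙ : L(B,C) × L(A,B) → L(A,C) is the internal composition map. -/
universe u v

/-- A Cartesian differential category, presented as an explicit algebraic structure:
a Cartesian left additive category equipped with a differential combinator `D`
satisfying the axioms [CD.1]–[CD.7]. -/
structure CDC where
  Obj : Type u
  Hom : Obj → Obj → Type v
  id : (A : Obj) → Hom A A
  comp : {A B C : Obj} → Hom B C → Hom A B → Hom A C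
  comp_id : ∀ {A B : Obj} (f : Hom A B), comp f (id A) = f
  id_comp : ∀ {A B : Obj} (f : Hom A B), comp (id B) f = f
  assoc : ∀ {A B C D : Obj} (h : Hom C D) (g : Hom B C) (f : Hom A B),
    comp (comp h g) f = comp h (comp g f)
  /- left additive structure -/
  add : {A B : Obj} → Hom A B → Hom A B → Hom A B
  zero : {A B : Obj} → Hom A B
  add_assoc : ∀ {A B : Obj} (f g h : Hom A B), add (add f g) h = add f (add g h)
  add_comm : ∀ {A B : Obj} (f g : Hom A B), add f g = add g f
  add_zero : ∀ {A B : Obj} (f : Hom A B), add f zero = f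
  add_comp : ∀ {A B C : Obj} (f g : Hom B C) (a : Hom A B),
    comp (add f g) a = add (comp f a) (comp g a)
  zero_comp : ∀ {A B C : Obj} (a : Hom A B), comp (zero : Hom B C) a = (zero : Hom A C)
  /- finite products -/
  prod : Obj → Obj → Obj
  p0 : {A B : Obj} → Hom (prod A B) A
  p1 : {A B : Obj} → Hom (prod A B) B
  pair : {X A B : Obj} → Hom X A → Hom X B → Hom X (prod A B)
  p0_pair : ∀ {X A B : Obj} (f : Hom X A) (g : Hom X B), comp p0 (pair f g) = f
  p1_pair : ∀ {X A B : Obj} (f : Hom X A) (g : Hom X B), comp p1 (pair f g) = g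
  pair_unique : ∀ {X A B : Obj} (h : Hom X (prod A B)) (f : Hom X A) (g : Hom X B),
    comp p0 h = f → comp p1 h = g → h = pair f g
  term : Obj
  bang : (A : Obj) → Hom A term
  bang_unique : ∀ {A : Obj} (f : Hom A term), f = bang A
  /- projections are additive -/
  p0_add : ∀ {X A B : Obj} (a b : Hom X (prod A B)),
    comp p0 (add a b) = add (comp p0 a) (comp p0 b)
  p1_add : ∀ {X A B : Obj} (a b : Hom X (prod A B)),
    comp p1 (add a b) = add (comp p1 a) (comp p1 b)
  p0_zero : ∀ {X A B : Obj}, comp (p0 : Hom (prod A B) A) (zero : Hom X (prod A B)) = zero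
  p1_zero : ∀ {X A B : Obj}, comp (p1 : Hom (prod A B) B) (zero : Hom X (prod A B)) = zero
  /- the differential combinator -/
  D : {A B : Obj} → Hom A B → Hom (prod A A) B
  CD1a : ∀ {A B : Obj} (f g : Hom A B), D (add f g) = add (D f) (D g)
  CD1b : ∀ {A B : Obj}, D (zero : Hom A B) = zero
  CD2a : ∀ {X A B : Obj} (f : Hom A B) (a b c : Hom X A),
    comp (D f) (pair a (add b c)) = add (comp (D f) (pair a b)) (comp (D f) (pair a c))
  CD2b : ∀ {X A B : Obj} (f : Hom A B) (a : Hom X A),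
    comp (D f) (pair a zero) = zero
  CD3a : ∀ {A : Obj}, D (id A) = (p1 : Hom (prod A A) A)
  CD3b : ∀ {A B : Obj}, D (p0 : Hom (prod A B) A) = comp p0 p1
  CD3c : ∀ {A B : Obj}, D (p1 : Hom (prod A B) B) = comp p1 p1
  CD4 : ∀ {A B C : Obj} (f : Hom A B) (g : Hom A C), D (pair f g) = pair (D f) (D g)
  CD5 : ∀ {A B C : Obj} (g : Hom B C) (f : Hom A B),
    D (comp g f) = comp (D g) (pair (comp f p0) (D f))
  CD6 : ∀ {X A B : Obj} (f : Hom A B) (a b c : Hom X A),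
    comp (D (D f)) (pair (pair a b) (pair zero c)) = comp (D f) (pair a c)
  CD7 : ∀ {X A B : Obj} (f : Hom A B) (a b c : Hom X A),
    comp (D (D f)) (pair (pair a b) (pair c zero))
      = comp (D (D f)) (pair (pair a c) (pair b zero))

namespace CDC

variable (C : CDC)

/-- A map is linear if `D[f] = f ∘ π₁`. -/
def Linear {A B : C.Obj} (f : C.Hom A B) : Prop := C.D f = C.comp f C.p1

/-- A map `f : A × B → C` is linear in its second argument. -/
def LinSecond {A B Z : C.Obj} (f : C.Hom (C.prod A B) Z) : Prop :=
  ∀ {X : C.Obj} (a : C.Hom X A) (b d : C.Hom X B),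
    C.comp (C.D f) (C.pair (C.pair a b) (C.pair C.zero d)) = C.comp f (C.pair a d)

/-- A map `f : A × B → C` is linear in its first argument. -/
def LinFirst {A B Z : C.Obj} (f : C.Hom (C.prod A B) Z) : Prop :=
  ∀ {X : C.Obj} (a : C.Hom X A) (b : C.Hom X B) (c : C.Hom X A),
    C.comp (C.D f) (C.pair (C.pair a b) (C.pair c C.zero)) = C.comp f (C.pair c b)

/-- A map `f : A × B → C` is bilinear. -/
def Bilinear {A B Z : C.Obj} (f : C.Hom (C.prod A B) Z) : Prop :=
  ∀ {X : C.Obj} (a : C.Hom X A) (b : C.Hom X B) (c : C.Hom X A) (d : C.Hom X B),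
    C.comp (C.D f) (C.pair (C.pair a b) (C.pair c d))
      = C.add (C.comp f (C.pair a d)) (C.comp f (C.pair c b))

end CDC

/-- A linearly closed Cartesian differential category: a Cartesian differential
category with internal linear homs `L(A,B)`, bilinear evaluation maps
`ε_ℓ : L(A,B) × A → B`, and unique linear curries of maps linear in their
second argument. (`lcurry` is a total operation; its defining properties are only
required on maps linear in their second argument.) -/
structure LCCDC extends CDC where
  L : Obj → Obj → Obj
  ev : {A B : Obj} → Hom (prod (L A B) A) B
  ev_bilinear : ∀ {A B : Obj}, toCDC.Bilinear (ev (A := A) (B := B))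
  lcurry : {A B Z : Obj} → Hom (prod A B) Z → Hom A (L B Z)
  lcurry_eval : ∀ {A B Z : Obj} (f : Hom (prod A B) Z), toCDC.LinSecond f →
    comp ev (pair (comp (lcurry f) p0) p1) = f
  lcurry_unique : ∀ {A B Z : Obj} (f : Hom (prod A B) Z), toCDC.LinSecond f →
    ∀ (g : Hom A (L B Z)), comp ev (pair (comp g p0) p1) = f → g = lcurry f

namespace LCCDC

variable (C : LCCDC)

/-- The Jacobian of `f : A → B` is the linear curry of its derivative. -/
def J {A B : C.Obj} (f : C.Hom A B) : C.Hom A (C.L A B) := C.lcurry (C.D f)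

/-- The internal composition map `⊙ : L(B,C) × L(A,B) → L(A,C)`, the linear curry of
`ε_ℓ ∘ (1 × ε_ℓ)` (suitably reassociated). -/
def odot (A B Z : C.Obj) : C.Hom (C.prod (C.L B Z) (C.L A B)) (C.L A Z) :=
  C.lcurry (C.comp C.ev (C.pair (C.comp C.p0 C.p0)
    (C.comp C.ev (C.pair (C.comp C.p1 C.p0) C.p1))))

/-- For a linear map `f : A → B`, the point `p_f : ⊤ → L(A,B)`, the linear curry of
`f ∘ π₁ : ⊤ × A → B`. -/
def pt {A B : C.Obj} (f : C.Hom A B) : C.Hom C.term (C.L A B) :=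
  C.lcurry (C.comp f (C.p1 (A := C.term)))

end LCCDC

namespace LCCDC

variable (C : LCCDC)

lemma pair_comp' {X Y A B : C.Obj} (f : C.Hom Y A) (g : C.Hom Y B) (h : C.Hom X Y) :
    C.comp (C.pair f g) h = C.pair (C.comp f h) (C.comp g h) := by
  apply C.pair_unique
  · rw [← C.assoc, C.p0_pair]
  · rw [← C.assoc, C.p1_pair]

lemma zero_pair' {X A B : C.Obj} :
    C.pair (C.zero : C.Hom X A) (C.zero : C.Hom X B) = C.zero :=
  (C.pair_unique C.zero C.zero C.zero C.p0_zero C.p1_zero).symm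

lemma zero_add' {A B : C.Obj} (f : C.Hom A B) : C.add C.zero f = f := by
  rw [C.add_comm, C.add_zero]

lemma linSecond_D {A B : C.Obj} (f : C.Hom A B) : C.toCDC.LinSecond (C.D f) :=
  fun a b d => C.CD6 f a b d

lemma linSecond_zero {A B Z : C.Obj} :
    C.toCDC.LinSecond (C.zero : C.Hom (C.prod A B) Z) :=
  fun a b d => by rw [C.CD1b, C.zero_comp, C.zero_comp]

lemma ev_pair_zero {X A B : C.Obj} (x : C.Hom X (C.L A B)) :
    C.comp C.ev (C.pair x C.zero) = C.zero := by
  have h : ∀ (u : C.Hom X (C.L A B)),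
      C.add (C.comp C.ev (C.pair u C.zero))
        (C.comp C.ev (C.zero : C.Hom X (C.prod (C.L A B) A))) = C.zero := by
    intro u
    have hb := C.ev_bilinear (X := X) (A := A) (B := B) u C.zero C.zero C.zero
    rw [zero_pair', C.CD2b] at hb
    exact hb.symm
  have key : ∀ (u v : C.Hom X (C.L A B)),
      C.comp C.ev (C.pair u C.zero) = C.comp C.ev (C.pair v C.zero) := by
    intro u v
    calc C.comp C.ev (C.pair u C.zero)
        = C.add (C.comp C.ev (C.pair u C.zero))
            (C.add (C.comp C.ev (C.pair v C.zero))
              (C.comp C.ev (C.zero : C.Hom X (C.prod (C.L A B) A)))) := by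
          rw [h v, C.add_zero]
      _ = C.add (C.add (C.comp C.ev (C.pair u C.zero))
            (C.comp C.ev (C.zero : C.Hom X (C.prod (C.L A B) A))))
            (C.comp C.ev (C.pair v C.zero)) := by
          rw [C.add_comm (C.comp C.ev (C.pair v C.zero)), ← C.add_assoc]
      _ = C.comp C.ev (C.pair v C.zero) := by rw [h u, zero_add']
  have he := C.lcurry_eval (C.zero : C.Hom (C.prod C.term A) B) (linSecond_zero C)
  have hy : C.comp C.ev
      (C.pair (C.comp (C.lcurry (C.zero : C.Hom (C.prod C.term A) B)) (C.bang X))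
        (C.zero : C.Hom X A)) = C.zero := by
    have h2 := congrArg
      (fun t => C.comp t (C.pair (C.bang X) (C.zero : C.Hom X A))) he
    simp only [CDC.assoc, LCCDC.pair_comp', CDC.p0_pair, CDC.p1_pair,
      CDC.zero_comp] at h2
    exact h2
  rw [key x (C.comp (C.lcurry (C.zero : C.Hom (C.prod C.term A) B)) (C.bang X)), hy]

lemma ev_zero_pair {X A B : C.Obj} (b : C.Hom X A) :
    C.comp C.ev (C.pair (C.zero : C.Hom X (C.L A B)) b) = C.zero := by
  have h0 : C.comp C.ev (C.zero : C.Hom X (C.prod (C.L A B) A)) = C.zero := by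
    rw [← zero_pair']; exact ev_pair_zero C _
  have hb := C.ev_bilinear (X := X) (A := A) (B := B) C.zero b C.zero C.zero
  rw [zero_pair', C.CD2b, h0, zero_add'] at hb
  exact hb.symm

lemma Dev_pair {X A B : C.Obj} (a : C.Hom X (C.L A B)) (b d : C.Hom X A) :
    C.comp (C.D C.ev) (C.pair (C.pair a b) (C.pair C.zero d))
      = C.comp C.ev (C.pair a d) := by
  rw [C.ev_bilinear, ev_zero_pair, C.add_zero]

lemma ev_lcurry_pair {A B Z X : C.Obj} (m' : C.Hom (C.prod A B) Z)
    (hl : C.toCDC.LinSecond m') (u : C.Hom X A) (v : C.Hom X B) :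
    C.comp C.ev (C.pair (C.comp (C.lcurry m') u) v) = C.comp m' (C.pair u v) := by
  have h2 := congrArg (fun t => C.comp t (C.pair u v)) (C.lcurry_eval m' hl)
  simp only [CDC.assoc, LCCDC.pair_comp', CDC.p0_pair, CDC.p1_pair] at h2
  exact h2

lemma linSecond_odot_map {A B Z : C.Obj} :
    C.toCDC.LinSecond ((C.comp C.ev (C.pair (C.comp C.p0 C.p0)
      (C.comp C.ev (C.pair (C.comp C.p1 C.p0) C.p1))))
      : C.Hom (C.prod (C.prod (C.L B Z) (C.L A B)) A) Z) := by
  intro X a b d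
  simp only [CDC.CD5, CDC.CD4, CDC.CD3b, CDC.CD3c, LCCDC.pair_comp', CDC.assoc,
    CDC.p0_pair, CDC.p1_pair, CDC.p0_zero, CDC.p1_zero, CDC.zero_comp,
    LCCDC.Dev_pair]

end LCCDC

/-- the Jacobian chain rule: `J(g ∘ f) = ⊙ ∘ ⟨J(g) ∘ f, J(f)⟩`. -/
theorem jacobian_chain_rule (C : LCCDC) {A B Z : C.Obj}
    (f : C.Hom A B) (g : C.Hom B Z) :
    C.J (C.comp g f)
      = C.comp (C.odot A B Z) (C.pair (C.comp (C.J g) f) (C.J f)) := by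
  have hf := C.lcurry_eval (C.D f) (C.linSecond_D f)
  refine (C.lcurry_unique (C.D (C.comp g f)) (C.linSecond_D _) _ ?_).symm
  rw [C.CD5 g f]
  simp only [LCCDC.odot, LCCDC.J]
  rw [C.assoc, C.ev_lcurry_pair _ (C.linSecond_odot_map (A := A) (B := B) (Z := Z))]
  simp only [LCCDC.pair_comp', CDC.assoc, CDC.p0_pair, CDC.p1_pair]
  rw [hf, C.ev_lcurry_pair (C.D g) (C.linSecond_D g)]
end

section
/- A Cartesian closed differential category is linearly closed if and only if the linearization idempotent ℓ : [A,B] → [A,B] is a linear split idempotent for every A, B. In particular, if ℓ splits linearly via r : [A,B] → L(A,B) and s : L(A,B) → [A,B] with s ∘ r = ℓ and r ∘ s = 1, then L(A,B) with evaluation ε_ℓ := L^{[A,B]}[ε] ∘ (s × 1) and linear curry λ_ℓ(f) := r ∘ λ(f) gives a linearly closed structure. -/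
universe u v

/-- A Cartesian closed differential category: a Cartesian differential category which
is Cartesian closed and whose evaluation maps `ε : [A,B] × A → B` are linear in
their first argument. -/
structure CCDC extends CDC where
  ihom : Obj → Obj → Obj
  evc : {A B : Obj} → Hom (prod (ihom A B) A) B
  cur : {A B Z : Obj} → Hom (prod A B) Z → Hom A (ihom B Z)
  cur_eval : ∀ {A B Z : Obj} (f : Hom (prod A B) Z),
    comp evc (pair (comp (cur f) p0) p1) = f
  cur_unique : ∀ {A B Z : Obj} (f : Hom (prod A B) Z) (g : Hom A (ihom B Z)),
    comp evc (pair (comp g p0) p1) = f → g = cur f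
  evc_linFirst : ∀ {A B : Obj}, toCDC.LinFirst (evc (A := A) (B := B))

namespace CCDC

variable (C : CCDC)

/-- The linearization of `f : A × B → C` in context `A`:
`L^A[f] := D[f] ∘ ⟨⟨π₀, 0⟩, ⟨0, π₁⟩⟩`, which is linear in its second argument. -/
def linz {A B Z : C.Obj} (f : C.Hom (C.prod A B) Z) : C.Hom (C.prod A B) Z :=
  C.comp (C.D f) (C.pair (C.pair C.p0 C.zero) (C.pair C.zero C.p1))

/-- The linearization idempotent `ℓ : [A,B] → [A,B]`, the curry of the
linearization of the evaluation map in context `[A,B]`. -/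
def ell (A B : C.Obj) : C.Hom (C.ihom A B) (C.ihom A B) :=
  C.cur (C.linz (C.evc (A := A) (B := B)))

/-- The underlying Cartesian differential category is linearly closed: there exist
internal linear homs with bilinear evaluation maps and unique linear curries of maps
linear in their second argument. -/
def IsLinearlyClosed : Prop :=
  ∃ (L : C.Obj → C.Obj → C.Obj) (ev : ∀ A B : C.Obj, C.Hom (C.prod (L A B) A) B),
    (∀ A B : C.Obj, C.Bilinear (ev A B)) ∧
    (∀ {A B Z : C.Obj} (f : C.Hom (C.prod A B) Z), C.LinSecond f →
      ∃! g : C.Hom A (L B Z), C.comp (ev B Z) (C.pair (C.comp g C.p0) C.p1) = f)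

end CCDC

namespace CDC

attribute [simp] CDC.comp_id CDC.id_comp CDC.assoc CDC.p0_pair CDC.p1_pair
  CDC.zero_comp CDC.add_comp CDC.add_zero CDC.p0_zero CDC.p1_zero CDC.CD2b

variable (C : CDC)

@[simp] theorem comp_pair {X Y A B : C.Obj} (f : C.Hom Y A) (g : C.Hom Y B) (h : C.Hom X Y) :
    C.comp (C.pair f g) h = C.pair (C.comp f h) (C.comp g h) := by
  apply C.pair_unique <;> rw [← C.assoc] <;> simp

@[simp] theorem zero_add' {A B : C.Obj} (f : C.Hom A B) : C.add C.zero f = f := by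
  rw [C.add_comm]; exact C.add_zero f

theorem pair_p0_p1 {A B : C.Obj} : C.pair (C.p0 (A := A) (B := B)) C.p1 = C.id _ := by
  symm; apply C.pair_unique <;> simp

@[simp] theorem pair_zero_zero {X A B : C.Obj} :
    C.pair (C.zero : C.Hom X A) (C.zero : C.Hom X B) = C.zero := by
  symm; apply C.pair_unique <;> simp

theorem add_pair {X A B : C.Obj} (a c : C.Hom X A) (b d : C.Hom X B) :
    C.add (C.pair a b) (C.pair c d) = C.pair (C.add a c) (C.add b d) := by
  apply C.pair_unique
  · rw [C.p0_add]; simp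
  · rw [C.p1_add]; simp

@[simp] theorem D_comp_zero {X A B : C.Obj} (f : C.Hom A B) :
    C.comp (C.D f) (C.zero : C.Hom X (C.prod A A)) = C.zero := by
  rw [← C.pair_zero_zero, C.CD2b]

/-- extensionality via generic elements -/
theorem prod_ext {A B Z : C.Obj} {F G : C.Hom (C.prod A B) Z}
    (h : ∀ (X : C.Obj) (a : C.Hom X A) (b : C.Hom X B),
      C.comp F (C.pair a b) = C.comp G (C.pair a b)) : F = G := by
  have := h _ C.p0 C.p1
  rwa [C.pair_p0_p1, C.comp_id, C.comp_id] at this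

theorem D_comp_pair {A B Z X : C.Obj} (g : C.Hom B Z) (f : C.Hom A B)
    (u v : C.Hom X A) :
    C.comp (C.D (C.comp g f)) (C.pair u v)
      = C.comp (C.D g) (C.pair (C.comp f u) (C.comp (C.D f) (C.pair u v))) := by
  rw [C.CD5]; simp

theorem linear_D_pair {A B X : C.Obj} {s : C.Hom A B} (hs : C.Linear s)
    (a c : C.Hom X A) :
    C.comp (C.D s) (C.pair a c) = C.comp s c := by
  rw [hs]; simp

theorem linear_comp_zero {A B X : C.Obj} {s : C.Hom A B} (hs : C.Linear s) :
    C.comp s (C.zero : C.Hom X A) = C.zero := by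
  have := C.CD2b s (C.zero : C.Hom X A)
  rwa [C.linear_D_pair hs] at this

theorem linear_comp_add {A B X : C.Obj} {s : C.Hom A B} (hs : C.Linear s)
    (a b : C.Hom X A) :
    C.comp s (C.add a b) = C.add (C.comp s a) (C.comp s b) := by
  have h2 := C.CD2a s (C.zero : C.Hom X A) a b
  rw [C.linear_D_pair hs, C.linear_D_pair hs, C.linear_D_pair hs] at h2
  exact h2

end CDC
namespace CDC
variable (C : CDC)

/-- extensionality on a left-nested triple product -/
theorem prod3L_ext {A B Z W : C.Obj} {F G : C.Hom (C.prod (C.prod A B) W) Z}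
    (h : ∀ (X : C.Obj) (a : C.Hom X A) (b : C.Hom X B) (w : C.Hom X W),
      C.comp F (C.pair (C.pair a b) w) = C.comp G (C.pair (C.pair a b) w)) : F = G := by
  apply C.prod_ext
  intro X u w
  have hu : u = C.pair (C.comp C.p0 u) (C.comp C.p1 u) := C.pair_unique u _ _ rfl rfl
  rw [hu]; exact h X _ _ w

/-- extensionality on a product of products -/
theorem prod2_ext {A B A' B' Z : C.Obj} {F G : C.Hom (C.prod (C.prod A B) (C.prod A' B')) Z}
    (h : ∀ (X : C.Obj) (a : C.Hom X A) (b : C.Hom X B) (c : C.Hom X A') (d : C.Hom X B'),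
      C.comp F (C.pair (C.pair a b) (C.pair c d)) = C.comp G (C.pair (C.pair a b) (C.pair c d))) :
    F = G := by
  apply C.prod3L_ext
  intro X a b w
  have hw : w = C.pair (C.comp C.p0 w) (C.comp C.p1 w) := C.pair_unique w _ _ rfl rfl
  rw [hw]; exact h X a b _ _

end CDC
namespace CCDC
variable (C : CCDC)

theorem linz_apply {A B Z X : C.Obj} (f : C.Hom (C.prod A B) Z)
    (a : C.Hom X A) (b : C.Hom X B) :
    C.comp (C.linz f) (C.pair a b)
      = C.comp (C.D f) (C.pair (C.pair a C.zero) (C.pair C.zero b)) := by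
  simp [CCDC.linz]

theorem linz_linSecond {A B Z : C.Obj} (f : C.Hom (C.prod A B) Z) :
    C.LinSecond (C.linz f) := by
  intro X a b d
  simp only [CCDC.linz]
  rw [C.toCDC.D_comp_pair]
  simp [CDC.CD4, CDC.CD3b, CDC.CD3c, CDC.CD1b]
  rw [C.CD6]

theorem linSecond_linz {A B Z : C.Obj} {f : C.Hom (C.prod A B) Z}
    (hf : C.LinSecond f) : C.linz f = f := by
  apply C.toCDC.prod_ext
  intro X a b
  rw [C.linz_apply]
  exact hf a C.zero b

theorem linz_px1 {A B Z Y : C.Obj} (f : C.Hom (C.prod A B) Z) (h : C.Hom Y A) :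
    C.comp (C.linz f) (C.pair (C.comp h C.p0) C.p1)
      = C.linz (C.comp f (C.pair (C.comp h C.p0) C.p1)) := by
  apply C.toCDC.prod_ext
  intro X a b
  simp only [CDC.comp_pair, CDC.assoc, CDC.p0_pair, CDC.p1_pair]
  rw [C.linz_apply, C.linz_apply]
  rw [C.toCDC.D_comp_pair]
  simp [CDC.CD4, CDC.CD3b, CDC.CD3c, CDC.CD1b, CDC.CD5]

end CCDC
namespace CCDC
variable (C : CCDC)

theorem pair_decomp {X A B : C.Obj} (c : C.Hom X A) (d : C.Hom X B) :
    C.pair c d = C.add (C.pair c C.zero) (C.pair C.zero d) := by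
  rw [C.toCDC.add_pair]; simp

theorem linFirst_decomp {A B Z : C.Obj} {f : C.Hom (C.prod A B) Z} (hf : C.LinFirst f) :
    C.D f = C.add (C.comp f (C.pair (C.comp C.p0 C.p1) (C.comp C.p1 C.p0)))
      (C.comp (C.D f) (C.pair C.p0 (C.pair C.zero (C.comp C.p1 C.p1)))) := by
  apply C.toCDC.prod2_ext
  intro X a b c d
  conv_lhs => rw [C.pair_decomp c d, C.CD2a, hf]
  simp

theorem linFirst_linz {A B Z : C.Obj} {f : C.Hom (C.prod A B) Z} (hf : C.LinFirst f) :
    C.LinFirst (C.linz f) := by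
  intro X a b c
  simp only [CCDC.linz]
  rw [C.toCDC.D_comp_pair]
  simp [CDC.CD4, CDC.CD3b, CDC.CD3c, CDC.CD1b]
  rw [C.CD7]
  have hDD : C.D (C.D f)
      = C.add (C.D (C.comp f (C.pair (C.comp C.p0 C.p1) (C.comp C.p1 C.p0))))
          (C.D (C.comp (C.D f) (C.pair C.p0 (C.pair C.zero (C.comp C.p1 C.p1))))) := by
    conv_lhs => rw [C.linFirst_decomp hf, C.CD1a]
  rw [hDD, C.add_comp]
  rw [C.toCDC.D_comp_pair, C.toCDC.D_comp_pair]
  simp [CDC.CD4, CDC.CD3b, CDC.CD3c, CDC.CD1b, CDC.CD5]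
  rw [C.CD7]
  simp

end CCDC
namespace CCDC
variable (C : CCDC)

theorem bilinear_of {A B Z : C.Obj} {f : C.Hom (C.prod A B) Z}
    (h1 : C.LinFirst f) (h2 : C.LinSecond f) : C.Bilinear f := by
  intro X a b c d
  rw [C.pair_decomp c d, C.CD2a, h1, h2, C.add_comm]

theorem linFirst_px1 {A B Z Y : C.Obj} {f : C.Hom (C.prod A B) Z} {s : C.Hom Y A}
    (hf : C.LinFirst f) (hs : C.Linear s) :
    C.LinFirst (C.comp f (C.pair (C.comp s C.p0) C.p1)) := by
  intro X a b c
  rw [C.toCDC.D_comp_pair]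
  simp [CDC.CD4, CDC.CD3c, CDC.CD5, CDC.CD3b]
  rw [C.toCDC.linear_D_pair hs, hf]

theorem linSecond_px1 {A B Z Y : C.Obj} {f : C.Hom (C.prod A B) Z} (s : C.Hom Y A)
    (hf : C.LinSecond f) :
    C.LinSecond (C.comp f (C.pair (C.comp s C.p0) C.p1)) := by
  have h : C.comp f (C.pair (C.comp s C.p0) C.p1)
      = C.linz (C.comp f (C.pair (C.comp s C.p0) C.p1)) := by
    conv_lhs => rw [← C.linSecond_linz hf]
    rw [C.linz_px1]
  have h2 : C.LinSecond (C.linz (C.comp f (C.pair (C.comp s C.p0) C.p1))) :=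
    C.linz_linSecond _
  rwa [← h] at h2

theorem cur_comp {A B Z Y : C.Obj} (f : C.Hom (C.prod A B) Z) (g : C.Hom Y A) :
    C.comp (C.cur f) g = C.cur (C.comp f (C.pair (C.comp g C.p0) C.p1)) := by
  apply C.cur_unique
  have := C.cur_eval f
  calc C.comp C.evc (C.pair (C.comp (C.comp (C.cur f) g) C.p0) C.p1)
      = C.comp (C.comp C.evc (C.pair (C.comp (C.cur f) C.p0) C.p1))
          (C.pair (C.comp g C.p0) C.p1) := by simp
    _ = C.comp f (C.pair (C.comp g C.p0) C.p1) := by rw [this]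

end CCDC
namespace CCDC
variable (C : CCDC)

theorem evc_D_cur {A B Z X : C.Obj} (f : C.Hom (C.prod A B) Z)
    (u v : C.Hom X A) (b : C.Hom X B) :
    C.comp C.evc (C.pair (C.comp (C.D (C.cur f)) (C.pair u v)) b)
      = C.comp (C.D f) (C.pair (C.pair u b) (C.pair v C.zero)) := by
  have hD : C.D (C.comp C.evc (C.pair (C.comp (C.cur f) C.p0) C.p1)) = C.D f := by
    rw [C.cur_eval]
  have h := congrArg (fun g => C.comp g (C.pair (C.pair u b) (C.pair v C.zero))) hD
  rw [C.toCDC.D_comp_pair] at h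
  simp [CDC.CD4, CDC.CD3c, CDC.CD5, CDC.CD3b] at h
  rw [C.evc_linFirst] at h
  rw [← h]

theorem D_cur {A B Z : C.Obj} (f : C.Hom (C.prod A B) Z) :
    C.D (C.cur f) = C.cur (C.comp (C.D f)
      (C.pair (C.pair (C.comp C.p0 C.p0) C.p1) (C.pair (C.comp C.p1 C.p0) C.zero))) := by
  apply C.cur_unique
  apply C.toCDC.prod3L_ext
  intro X u v b
  have h2 : C.pair (C.comp C.p0 (C.pair u v)) (C.comp C.p1 (C.pair u v)) = C.pair u v := by simp
  calc C.comp (C.comp C.evc (C.pair (C.comp (C.D (C.cur f)) C.p0) C.p1))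
        (C.pair (C.pair u v) b)
      = C.comp C.evc (C.pair (C.comp (C.D (C.cur f)) (C.pair u v)) b) := by simp
    _ = C.comp (C.D f) (C.pair (C.pair u b) (C.pair v C.zero)) := C.evc_D_cur f u v b
    _ = C.comp (C.comp (C.D f)
          (C.pair (C.pair (C.comp C.p0 C.p0) C.p1) (C.pair (C.comp C.p1 C.p0) C.zero)))
          (C.pair (C.pair u v) b) := by simp

theorem linear_cur {A B Z : C.Obj} {f : C.Hom (C.prod A B) Z} (hf : C.LinFirst f) :
    C.Linear (C.cur f) := by
  show C.D (C.cur f) = C.comp (C.cur f) C.p1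
  rw [C.D_cur, C.cur_comp]
  congr 1
  apply C.toCDC.prod3L_ext
  intro X u v b
  simp
  rw [hf]

theorem ell_cur {A B Z : C.Obj} {f : C.Hom (C.prod A B) Z} (hf : C.LinSecond f) :
    C.comp (C.ell B Z) (C.cur f) = C.cur f := by
  rw [CCDC.ell, C.cur_comp, C.linz_px1, C.cur_eval, C.linSecond_linz hf]

end CCDC
namespace CCDC
variable (C : CCDC)

theorem bilin_evl {A B W : C.Obj} (s : C.Hom W (C.ihom A B)) (hs : C.Linear s) :
    C.Bilinear (C.comp (C.linz (C.evc (A := A) (B := B)))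
      (C.pair (C.comp s C.p0) C.p1)) :=
  C.bilinear_of (C.linFirst_px1 (C.linFirst_linz C.evc_linFirst) hs)
    (C.linSecond_px1 s (C.linz_linSecond _))

theorem exist_eq {A B Z W : C.Obj} {f : C.Hom (C.prod A B) Z} (hf : C.LinSecond f)
    (r : C.Hom (C.ihom B Z) W) (s : C.Hom W (C.ihom B Z))
    (hsr : C.comp s r = C.ell B Z) :
    C.comp (C.comp (C.linz (C.evc (A := B) (B := Z))) (C.pair (C.comp s C.p0) C.p1))
      (C.pair (C.comp (C.comp r (C.cur f)) C.p0) C.p1) = f := by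
  calc C.comp (C.comp (C.linz (C.evc (A := B) (B := Z))) (C.pair (C.comp s C.p0) C.p1))
        (C.pair (C.comp (C.comp r (C.cur f)) C.p0) C.p1)
      = C.comp (C.linz (C.evc (A := B) (B := Z)))
          (C.pair (C.comp (C.comp (C.comp s r) (C.cur f)) C.p0) C.p1) := by simp
    _ = C.comp (C.linz (C.evc (A := B) (B := Z)))
          (C.pair (C.comp (C.comp (C.ell B Z) (C.cur f)) C.p0) C.p1) := by rw [hsr]
    _ = C.comp (C.linz (C.evc (A := B) (B := Z)))
          (C.pair (C.comp (C.cur f) C.p0) C.p1) := by rw [C.ell_cur hf]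
    _ = C.linz (C.comp C.evc (C.pair (C.comp (C.cur f) C.p0) C.p1)) := C.linz_px1 _ _
    _ = C.linz f := by rw [C.cur_eval]
    _ = f := C.linSecond_linz hf

theorem uniq_eq {A B Z W : C.Obj} {f : C.Hom (C.prod A B) Z} (hf : C.LinSecond f)
    (r : C.Hom (C.ihom B Z) W) (s : C.Hom W (C.ihom B Z))
    (hsr : C.comp s r = C.ell B Z) (hrs : C.comp r s = C.id W)
    (g : C.Hom A W)
    (hg : C.comp (C.comp (C.linz (C.evc (A := B) (B := Z)))
        (C.pair (C.comp s C.p0) C.p1)) (C.pair (C.comp g C.p0) C.p1) = f) :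
    g = C.comp r (C.cur f) := by
  have hg' : C.comp (C.linz (C.evc (A := B) (B := Z)))
      (C.pair (C.comp (C.comp s g) C.p0) C.p1) = f := by rw [← hg]; simp
  have hu : C.comp (C.ell B Z) (C.comp s g) = C.cur f := by
    rw [CCDC.ell, C.cur_comp, hg']
  have key : C.comp r (C.cur f) = g := by
    calc C.comp r (C.cur f)
        = C.comp r (C.comp (C.comp s r) (C.comp s g)) := by rw [← hu, hsr]
      _ = C.comp (C.comp r s) (C.comp (C.comp r s) g) := by simp
      _ = g := by rw [hrs]; simp
  exact key.symm

theorem main2 (C : CCDC) (L : C.Obj → C.Obj → C.Obj)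
    (r : ∀ A B : C.Obj, C.Hom (C.ihom A B) (L A B))
    (s : ∀ A B : C.Obj, C.Hom (L A B) (C.ihom A B))
    (h : ∀ A B : C.Obj, C.Linear (r A B) ∧ C.Linear (s A B) ∧
        C.comp (s A B) (r A B) = C.ell A B ∧ C.comp (r A B) (s A B) = C.id (L A B)) :
    (∀ A B : C.Obj,
        C.Bilinear (C.comp (C.linz (C.evc (A := A) (B := B)))
          (C.pair (C.comp (s A B) C.p0) C.p1))) ∧
    (∀ {A B Z : C.Obj} (f : C.Hom (C.prod A B) Z), C.LinSecond f →
      (C.comp (C.comp (C.linz (C.evc (A := B) (B := Z)))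
            (C.pair (C.comp (s B Z) C.p0) C.p1))
          (C.pair (C.comp (C.comp (r B Z) (C.cur f)) C.p0) C.p1) = f) ∧
      (∀ g : C.Hom A (L B Z),
        C.comp (C.comp (C.linz (C.evc (A := B) (B := Z)))
            (C.pair (C.comp (s B Z) C.p0) C.p1))
          (C.pair (C.comp g C.p0) C.p1) = f →
        g = C.comp (r B Z) (C.cur f))) := by
  constructor
  · intro A B
    exact C.bilin_evl (s A B) (h A B).2.1
  · intro A B Z f hf
    exact ⟨C.exist_eq hf (r B Z) (s B Z) (h B Z).2.2.1,
      fun g hg => C.uniq_eq hf (r B Z) (s B Z) (h B Z).2.2.1 (h B Z).2.2.2 g hg⟩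

end CCDC
namespace CCDC
variable (C : CCDC)

theorem zero_linSecond {A B Z : C.Obj} : C.LinSecond (C.zero : C.Hom (C.prod A B) Z) := by
  intro X a b d
  rw [C.CD1b]; simp

theorem fwd (h : C.IsLinearlyClosed) (A B : C.Obj) :
    ∃ (X : C.Obj) (r : C.Hom (C.ihom A B) X) (s : C.Hom X (C.ihom A B)),
      C.Linear r ∧ C.Linear s ∧ C.comp s r = C.ell A B ∧ C.comp r s = C.id X := by
  obtain ⟨L, ev, hbil, hcur⟩ := h
  -- step 1: zero slots
  obtain ⟨g0, hg0eq, -⟩ := hcur (C.zero : C.Hom (C.prod C.term A) B) C.zero_linSecond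
  have hga : ∀ (Y : C.Obj), C.comp (ev A B) (C.pair (C.comp g0 (C.bang Y)) C.zero)
      = C.zero := by
    intro Y
    have h1 := congrArg (fun t => C.comp t (C.pair (C.bang Y) (C.zero : C.Hom Y A))) hg0eq
    simpa using h1
  have hAdd : ∀ {X : C.Obj} (a : C.Hom X (L A B)) (b : C.Hom X A),
      C.add (C.comp (ev A B) (C.pair a C.zero)) (C.comp (ev A B) (C.pair C.zero b))
        = C.zero := by
    intro X a b
    have h2 := hbil A B a b (C.zero : C.Hom X (L A B)) (C.zero : C.Hom X A)
    simpa using h2.symm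
  have hz1 : ∀ {X : C.Obj} (b : C.Hom X A),
      C.comp (ev A B) (C.pair C.zero b) = C.zero := by
    intro X b
    have h3 := hAdd (C.comp g0 (C.bang X)) b
    rw [hga X] at h3
    simpa using h3
  have hz0 : ∀ {X : C.Obj} (a : C.Hom X (L A B)),
      C.comp (ev A B) (C.pair a C.zero) = C.zero := by
    intro X a
    have h4 := hAdd a (C.zero : C.Hom X A)
    rw [hz1 (C.zero : C.Hom X A)] at h4
    simpa using h4
  -- step 2: linearity of ev in each slot
  have heLS : C.LinSecond (ev A B) := by
    intro X a b d
    rw [hbil A B a b C.zero d, hz1 b]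
    simp
  have heLF : C.LinFirst (ev A B) := by
    intro X a b c
    rw [hbil A B a b c C.zero, hz0 a]
    simp
  have linz_e : C.linz (ev A B) = ev A B := C.linSecond_linz heLS
  -- candidate splitting
  obtain ⟨r, hr, -⟩ := hcur (C.linz (C.evc (A := A) (B := B))) (C.linz_linSecond _)
  refine ⟨L A B, r, C.cur (ev A B), ?_, C.linear_cur heLF, ?_, ?_⟩
  · -- Linear r
    have hkey : ∀ (X : C.Obj) (u v : C.Hom X (C.ihom A B)) (a : C.Hom X A),
        C.comp (ev A B) (C.pair (C.comp (C.D r) (C.pair u v)) a)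
          = C.comp (ev A B) (C.pair (C.comp r v) a) := by
      intro X u v a
      have hDr := congrArg C.D hr
      have h3 := congrArg (fun t => C.comp t
        (C.pair (C.pair u a) (C.pair v (C.zero : C.Hom X A)))) hDr
      rw [C.toCDC.D_comp_pair] at h3
      simp [CDC.CD4, CDC.CD3c, CDC.CD5, CDC.CD3b] at h3
      rw [heLF (C.comp r u) a (C.comp (C.D r) (C.pair u v))] at h3
      rw [C.linFirst_linz C.evc_linFirst u a v] at h3
      rw [← hr] at h3
      simpa using h3
    obtain ⟨g2, hg2, hg2u⟩ := hcur
      (C.comp (ev A B) (C.pair (C.comp (C.comp r C.p1) C.p0) C.p1))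
      (C.linSecond_px1 _ heLS)
    have hPhi : C.comp (ev A B) (C.pair (C.comp (C.D r) C.p0) C.p1)
        = C.comp (ev A B) (C.pair (C.comp (C.comp r C.p1) C.p0) C.p1) := by
      apply C.toCDC.prod3L_ext
      intro X u v a
      simpa using hkey X u v a
    show C.D r = C.comp r C.p1
    exact (hg2u _ hPhi).trans (hg2u _ rfl).symm
  · -- s ∘ r = ℓ
    have prf : C.comp C.evc (C.pair (C.comp (C.comp (C.cur (ev A B)) r) C.p0) C.p1)
        = C.linz (C.evc (A := A) (B := B)) := by
      calc C.comp C.evc (C.pair (C.comp (C.comp (C.cur (ev A B)) r) C.p0) C.p1)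
          = C.comp (C.comp C.evc (C.pair (C.comp (C.cur (ev A B)) C.p0) C.p1))
              (C.pair (C.comp r C.p0) C.p1) := by simp
        _ = C.comp (ev A B) (C.pair (C.comp r C.p0) C.p1) := by rw [C.cur_eval]
        _ = _ := hr
    rw [CCDC.ell]
    exact C.cur_unique _ _ prf
  · -- r ∘ s = id
    obtain ⟨g1, hg1, hg1u⟩ := hcur (ev A B) heLS
    have e2 : C.comp (ev A B) (C.pair (C.comp (C.id (L A B)) C.p0) C.p1) = ev A B := by
      simp [CDC.pair_p0_p1]
    have e1 : C.comp (ev A B)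
        (C.pair (C.comp (C.comp r (C.cur (ev A B))) C.p0) C.p1) = ev A B := by
      calc C.comp (ev A B) (C.pair (C.comp (C.comp r (C.cur (ev A B))) C.p0) C.p1)
          = C.comp (C.comp (ev A B) (C.pair (C.comp r C.p0) C.p1))
              (C.pair (C.comp (C.cur (ev A B)) C.p0) C.p1) := by simp
        _ = C.comp (C.linz C.evc) (C.pair (C.comp (C.cur (ev A B)) C.p0) C.p1) := by
              rw [hr]
        _ = C.linz (C.comp C.evc (C.pair (C.comp (C.cur (ev A B)) C.p0) C.p1)) :=
              C.linz_px1 _ _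
        _ = C.linz (ev A B) := by rw [C.cur_eval]
        _ = ev A B := linz_e
    exact (hg1u _ e1).trans (hg1u _ e2).symm

end CCDC
namespace CCDC
variable (C : CCDC)

theorem bwd (hsplit : ∀ A B : C.Obj, ∃ (X : C.Obj) (r : C.Hom (C.ihom A B) X)
      (s : C.Hom X (C.ihom A B)),
      C.Linear r ∧ C.Linear s ∧ C.comp s r = C.ell A B ∧ C.comp r s = C.id X) :
    C.IsLinearlyClosed := by
  choose Xf rf sf h1 h2 h3 h4 using hsplit
  refine ⟨Xf, fun A B => C.comp (C.linz (C.evc (A := A) (B := B)))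
    (C.pair (C.comp (sf A B) C.p0) C.p1), fun A B => C.bilin_evl (sf A B) (h2 A B), ?_⟩
  intro A B Z f hf
  exact ⟨C.comp (rf B Z) (C.cur f), C.exist_eq hf (rf B Z) (sf B Z) (h3 B Z),
    fun g hg => C.uniq_eq hf (rf B Z) (sf B Z) (h3 B Z) (h4 B Z) g hg⟩

end CCDC
/-- a Cartesian closed differential category is linearly closed iff the
linearization idempotent `ℓ : [A,B] → [A,B]` is a linear split idempotent for all
`A, B`. In particular, if `ℓ` splits linearly via `r : [A,B] → L(A,B)` and
`s : L(A,B) → [A,B]` (with `s ∘ r = ℓ` and `r ∘ s = 1`), then `L(A,B)` with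
evaluation `ε_ℓ := L^{[A,B]}[ε] ∘ (s × 1)` and linear curry `λ_ℓ(f) := r ∘ λ(f)`
gives a linearly closed structure. -/
theorem linearlyClosed_iff_ell_splits (C : CCDC) :
    (C.IsLinearlyClosed ↔
      ∀ A B : C.Obj, ∃ (X : C.Obj) (r : C.Hom (C.ihom A B) X) (s : C.Hom X (C.ihom A B)),
        C.Linear r ∧ C.Linear s ∧ C.comp s r = C.ell A B ∧ C.comp r s = C.id X) ∧
    (∀ (L : C.Obj → C.Obj → C.Obj)
       (r : ∀ A B : C.Obj, C.Hom (C.ihom A B) (L A B))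
       (s : ∀ A B : C.Obj, C.Hom (L A B) (C.ihom A B)),
      (∀ A B : C.Obj, C.Linear (r A B) ∧ C.Linear (s A B) ∧
          C.comp (s A B) (r A B) = C.ell A B ∧ C.comp (r A B) (s A B) = C.id (L A B)) →
      (∀ A B : C.Obj,
          C.Bilinear (C.comp (C.linz (C.evc (A := A) (B := B)))
            (C.pair (C.comp (s A B) C.p0) C.p1))) ∧
      (∀ {A B Z : C.Obj} (f : C.Hom (C.prod A B) Z), C.LinSecond f →
        (C.comp (C.comp (C.linz (C.evc (A := B) (B := Z)))
              (C.pair (C.comp (s B Z) C.p0) C.p1))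
            (C.pair (C.comp (C.comp (r B Z) (C.cur f)) C.p0) C.p1) = f) ∧
        (∀ g : C.Hom A (L B Z),
          C.comp (C.comp (C.linz (C.evc (A := B) (B := Z)))
              (C.pair (C.comp (s B Z) C.p0) C.p1))
            (C.pair (C.comp g C.p0) C.p1) = f →
          g = C.comp (r B Z) (C.cur f)))) := by
  refine ⟨⟨fun h => C.fwd h, fun h => C.bwd h⟩, fun L r s h => CCDC.main2 C L r s h⟩
end

section
/- In a Cartesian closed differential category which is linearly closed, for any map f : A × B → C linear in its second argument, the ordinary curry factors through the linear curry: λ(f) = s ∘ λ_ℓ(f), where s : L(B,C) → [B,C] is the linear splitting map of the linearization idempotent ℓ. -/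
universe u v

/-- A Cartesian closed differential category which is also linearly closed. -/
structure CCLC extends CCDC where
  L : Obj → Obj → Obj
  evl : {A B : Obj} → Hom (prod (L A B) A) B
  evl_bilinear : ∀ {A B : Obj}, toCDC.Bilinear (evl (A := A) (B := B))
  lcurry : {A B Z : Obj} → Hom (prod A B) Z → Hom A (L B Z)
  lcurry_eval : ∀ {A B Z : Obj} (f : Hom (prod A B) Z), toCDC.LinSecond f →
    comp evl (pair (comp (lcurry f) p0) p1) = f
  lcurry_unique : ∀ {A B Z : Obj} (f : Hom (prod A B) Z), toCDC.LinSecond f →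
    ∀ (g : Hom A (L B Z)), comp evl (pair (comp g p0) p1) = f → g = lcurry f

lemma CDC.pair_comp (C : CDC) {X Y A B : C.Obj} (a : C.Hom Y A) (b : C.Hom Y B)
    (c : C.Hom X Y) : C.comp (C.pair a b) c = C.pair (C.comp a c) (C.comp b c) := by
  apply C.pair_unique
  · rw [← C.assoc, C.p0_pair]
  · rw [← C.assoc, C.p1_pair]

lemma CDC.strength_comp (C : CDC) {X P Q B : C.Obj} (a : C.Hom P Q) (b : C.Hom X P) :
    C.comp (C.pair (C.comp a (C.p0 (B := B))) C.p1) (C.pair (C.comp b C.p0) C.p1)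
      = C.pair (C.comp (C.comp a b) C.p0) C.p1 := by
  rw [C.pair_comp, C.p1_pair, C.assoc, C.p0_pair, ← C.assoc, C.assoc]

/-- in a Cartesian closed differential category which is linearly
closed, if the linearization idempotent `ℓ : [B,C] → [B,C]` splits linearly via
`r : [B,C] → L(B,C)`, `s : L(B,C) → [B,C]` with `s ∘ r = ℓ`, `r ∘ s = 1`, and
`ε_ℓ = L^{[B,C]}[ε] ∘ (s × 1)`, then for any `f : A × B → C` linear in its second
argument, the ordinary curry factors through the linear curry: `λ(f) = s ∘ λ_ℓ(f)`. -/
theorem cur_eq_s_comp_lcurry (C : CCLC) {A B Z : C.Obj}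
    (r : C.Hom (C.ihom B Z) (C.L B Z)) (s : C.Hom (C.L B Z) (C.ihom B Z))
    (hr : C.Linear r) (hs : C.Linear s)
    (hsr : C.comp s r = C.ell B Z) (hrs : C.comp r s = C.id (C.L B Z))
    (hev : (C.evl : C.Hom (C.prod (C.L B Z) B) Z)
      = C.comp (C.linz (C.evc (A := B) (B := Z))) (C.pair (C.comp s C.p0) C.p1))
    (f : C.Hom (C.prod A B) Z) (hf : C.LinSecond f) :
    C.cur f = C.comp s (C.lcurry f) := by
  have h1 := C.lcurry_eval f hf
  rw [hev] at h1
  have key : C.comp C.evc (C.pair (C.comp (C.ell B Z) C.p0) C.p1)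
      = C.linz (C.evc (A := B) (B := Z)) := C.cur_eval _
  have hls : C.comp (C.ell B Z) (C.comp s (C.lcurry f))
      = C.comp s (C.lcurry f) := by
    rw [← hsr, C.toCDC.assoc, ← C.toCDC.assoc r, hrs, C.toCDC.id_comp]
  symm
  apply C.cur_unique
  calc C.comp C.evc (C.pair (C.comp (C.comp s (C.lcurry f)) C.p0) C.p1)
      = C.comp C.evc (C.comp (C.pair (C.comp (C.ell B Z) C.p0) C.p1)
          (C.pair (C.comp (C.comp s (C.lcurry f)) C.p0) C.p1)) := by
        rw [C.toCDC.strength_comp, hls]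
    _ = C.comp (C.comp C.evc (C.pair (C.comp (C.ell B Z) C.p0) C.p1))
          (C.pair (C.comp (C.comp s (C.lcurry f)) C.p0) C.p1) :=
        (C.toCDC.assoc _ _ _).symm
    _ = C.comp (C.linz C.evc)
          (C.comp (C.pair (C.comp s C.p0) C.p1) (C.pair (C.comp (C.lcurry f) C.p0) C.p1)) := by
        rw [key, C.toCDC.strength_comp]
    _ = C.comp (C.comp (C.linz C.evc) (C.pair (C.comp s C.p0) C.p1))
          (C.pair (C.comp (C.lcurry f) C.p0) C.p1) := (C.toCDC.assoc _ _ _).symm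
    _ = f := h1
end
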